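/- arXiv:1302.3058 — 11 statements merged into one kernel-verified Lean document; each statement's English description precedes it below -/
import Mathlib

section
/- Let e = (x₁,y₁,x₂,y₂,z) ∈ ℝ⁵ be an equilibrium of the 5-component Maxwell–Bloch system. Then the differential of I restricted to the level set of C vanishes at e, i.e., ⟨v, ∇I(e)⟩ = 0 for every v ∈ ℝ⁵ with ⟨v, ∇C(e)⟩ = 0, if and only if x₁ = y₁ = x₂ = y₂ = 0 (i.e., e belongs to E₁ ∪ E₃). In particular, at every equilibrium e = (M,0,N,0,0) with M² + N² ≠ 0 there exists v tangent to the level set of C with ⟨v, ∇I(e)⟩ ≠ 0. -/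
open Matrix

/-- At an equilibrium `e = (x₁,y₁,x₂,y₂,z)` of the Maxwell–Bloch system, the differential of
`I` restricted to the level set of `C` vanishes (`⟨v, ∇I(e)⟩ = 0` for every `v` with
`⟨v, ∇C(e)⟩ = 0`) iff `x₁ = y₁ = x₂ = y₂ = 0`, i.e. iff `e ∈ E₁ ∪ E₃`. In particular, at every
equilibrium `(M,0,N,0,0)` with `M² + N² ≠ 0` there is a tangent vector `v` with
`⟨v, ∇I(e)⟩ ≠ 0`. Here `∇C(e) = (x₁,0,x₂,0,1)` and `∇I(e) = (−y₂,x₂,y₁,−x₁,0)`. -/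
theorem maxwell_bloch_dI_on_leaf (x1 y1 x2 y2 z : ℝ)
    (h1 : y1 = 0) (h2 : x1 * z = 0) (h3 : y2 = 0) (h4 : x2 * z = 0)
    (h5 : -(x1 * y1 + x2 * y2) = 0) :
    ((∀ v : Fin 5 → ℝ, v ⬝ᵥ (![x1, 0, x2, 0, 1] : Fin 5 → ℝ) = 0 →
        v ⬝ᵥ (![-y2, x2, y1, -x1, 0] : Fin 5 → ℝ) = 0) ↔
      (x1 = 0 ∧ y1 = 0 ∧ x2 = 0 ∧ y2 = 0)) ∧
    (∀ M N : ℝ, M ^ 2 + N ^ 2 ≠ 0 →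
      ∃ v : Fin 5 → ℝ, v ⬝ᵥ (![M, 0, N, 0, 1] : Fin 5 → ℝ) = 0 ∧
        v ⬝ᵥ (![0, N, 0, -M, 0] : Fin 5 → ℝ) ≠ 0) := by
  subst h1 h3
  constructor
  · constructor
    · intro h
      have hx2 := h ![0,1,0,0,0] (by simp [dotProduct, Fin.sum_univ_five])
      have hx1 := h ![0,0,0,1,0] (by simp [dotProduct, Fin.sum_univ_five])
      simp [dotProduct, Fin.sum_univ_five] at hx1 hx2
      exact ⟨hx1, rfl, hx2, rfl⟩
    · rintro ⟨hx1, -, hx2, -⟩ v hv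
      simp [hx1, hx2, dotProduct, Fin.sum_univ_five]
  · intro M N hMN
    refine ⟨![0, N, 0, -M, 0], ?_, ?_⟩
    · simp [dotProduct, Fin.sum_univ_five]
    · simp [dotProduct, Fin.sum_univ_five]
      intro h
      exact hMN (by nlinarith)
end

section
/- For every c > 0 and every nonzero real α, the polynomial X⁴ + (2α² − 2c)X² + (α² + c)² ∈ ℂ[X] has four pairwise distinct complex roots, and they are of the form A+iB, A−iB, −A+iB, −A−iB with A, B nonzero real numbers (in particular, no root is real or purely imaginary). Consequently the equilibrium (0,0,0,0,c) of the reduced Maxwell–Bloch system on the leaf C⁻¹(c), c > 0, is a non-degenerate equilibrium of focus-focus type. -/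
open Polynomial

/-- For `c > 0` and `α ≠ 0`, the polynomial `X⁴ + (2α² − 2c)X² + (α² + c)² ∈ ℂ[X]`
has four pairwise distinct roots of the form `±A ± iB` with `A, B` nonzero reals:
the equilibrium `(0,0,0,0,c)` is non-degenerate of focus-focus type. -/
theorem focus_focus_roots (c α : ℝ) (hc : 0 < c) (hα : α ≠ 0) :
    ∃ A B : ℝ, A ≠ 0 ∧ B ≠ 0 ∧
      ((A : ℂ) + B * Complex.I ≠ (A : ℂ) - B * Complex.I ∧
       (A : ℂ) + B * Complex.I ≠ -(A : ℂ) + B * Complex.I ∧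
       (A : ℂ) + B * Complex.I ≠ -(A : ℂ) - B * Complex.I ∧
       (A : ℂ) - B * Complex.I ≠ -(A : ℂ) + B * Complex.I ∧
       (A : ℂ) - B * Complex.I ≠ -(A : ℂ) - B * Complex.I ∧
       -(A : ℂ) + B * Complex.I ≠ -(A : ℂ) - B * Complex.I) ∧
      (∀ w : ℂ,
        (X ^ 4 + C ((2 * α ^ 2 - 2 * c : ℝ) : ℂ) * X ^ 2 +
            C (((α ^ 2 + c) ^ 2 : ℝ) : ℂ)).IsRoot w ↔
          (w = (A : ℂ) + B * Complex.I ∨ w = (A : ℂ) - B * Complex.I ∨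
           w = -(A : ℂ) + B * Complex.I ∨ w = -(A : ℂ) - B * Complex.I)) := by
  have hA : Real.sqrt c ≠ 0 := (Real.sqrt_pos.mpr hc).ne'
  refine ⟨Real.sqrt c, α, hA, hα, ?_, ?_⟩
  · refine ⟨?_, ?_, ?_, ?_, ?_, ?_⟩ <;> simp [Complex.ext_iff] <;> intros <;>
      first
        | linarith [Real.sqrt_pos.mpr hc]
        | exact hα (by linarith)
        | (intro h2; exact hα (by linarith))
  · intro w
    have ha : ((Real.sqrt c : ℝ) : ℂ) ^ 2 = (c : ℂ) := by
      norm_cast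
      exact Real.sq_sqrt hc.le
    set a : ℂ := ((Real.sqrt c : ℝ) : ℂ)
    set b : ℂ := ((α : ℝ) : ℂ)
    have key : w ^ 4 + ((2 * α ^ 2 - 2 * c : ℝ) : ℂ) * w ^ 2 +
        (((α ^ 2 + c) ^ 2 : ℝ) : ℂ) =
        (w - (a + b * Complex.I)) * (w - (a - b * Complex.I)) *
          (w - (-a + b * Complex.I)) * (w - (-a - b * Complex.I)) := by
      push_cast
      linear_combination (2 * w ^ 2 - 2 * b ^ 2 - (c : ℂ) - a ^ 2) * ha +
        (2 * w ^ 2 * b ^ 2 + 2 * a ^ 2 * b ^ 2 + b ^ 4 * (1 - Complex.I ^ 2)) *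
          Complex.I_sq
    simp only [IsRoot, eval_add, eval_mul, eval_pow, eval_X, eval_C]
    rw [key, mul_eq_zero, mul_eq_zero, mul_eq_zero, sub_eq_zero, sub_eq_zero,
      sub_eq_zero, sub_eq_zero]
    tauto
end

section
/- For every c < 0 and every real α with α ≠ 0 and α² ≠ −c, the polynomial X⁴ + (2α² − 2c)X² + (α² + c)² ∈ ℂ[X] has four pairwise distinct purely imaginary roots, namely ±i(α + √(−c)) and ±i(α − √(−c)). Consequently the equilibrium (0,0,0,0,c) of the reduced Maxwell–Bloch system on the leaf C⁻¹(c), c < 0, is a non-degenerate equilibrium of center-center type. -/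
open Polynomial

/-- For `c < 0`, `α ≠ 0` and `α² ≠ −c`, the polynomial `X⁴ + (2α² − 2c)X² + (α² + c)² ∈ ℂ[X]`
has four pairwise distinct purely imaginary roots `±i(α + √(−c))` and `±i(α − √(−c))`:
the equilibrium `(0,0,0,0,c)` is non-degenerate of center-center type. -/
theorem center_center_roots (c α : ℝ) (hc : c < 0) (hα : α ≠ 0) (hα2 : α ^ 2 ≠ -c) :
    (Complex.I * ((α + Real.sqrt (-c) : ℝ) : ℂ) ≠ -(Complex.I * ((α + Real.sqrt (-c) : ℝ) : ℂ)) ∧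
     Complex.I * ((α + Real.sqrt (-c) : ℝ) : ℂ) ≠ Complex.I * ((α - Real.sqrt (-c) : ℝ) : ℂ) ∧
     Complex.I * ((α + Real.sqrt (-c) : ℝ) : ℂ) ≠ -(Complex.I * ((α - Real.sqrt (-c) : ℝ) : ℂ)) ∧
     -(Complex.I * ((α + Real.sqrt (-c) : ℝ) : ℂ)) ≠ Complex.I * ((α - Real.sqrt (-c) : ℝ) : ℂ) ∧
     -(Complex.I * ((α + Real.sqrt (-c) : ℝ) : ℂ)) ≠ -(Complex.I * ((α - Real.sqrt (-c) : ℝ) : ℂ)) ∧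
     Complex.I * ((α - Real.sqrt (-c) : ℝ) : ℂ) ≠ -(Complex.I * ((α - Real.sqrt (-c) : ℝ) : ℂ))) ∧
    (∀ w : ℂ,
      (X ^ 4 + C ((2 * α ^ 2 - 2 * c : ℝ) : ℂ) * X ^ 2 +
          C (((α ^ 2 + c) ^ 2 : ℝ) : ℂ)).IsRoot w ↔
        (w = Complex.I * ((α + Real.sqrt (-c) : ℝ) : ℂ) ∨
         w = -(Complex.I * ((α + Real.sqrt (-c) : ℝ) : ℂ)) ∨
         w = Complex.I * ((α - Real.sqrt (-c) : ℝ) : ℂ) ∨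
         w = -(Complex.I * ((α - Real.sqrt (-c) : ℝ) : ℂ)))) := by
  set s := Real.sqrt (-c) with hsdef
  have hs2 : s ^ 2 = -c := Real.sq_sqrt (by linarith)
  have hspos : 0 < s := Real.sqrt_pos.mpr (by linarith)
  have h1 : α + s ≠ 0 := fun h => hα2 (by nlinarith)
  have h2 : α - s ≠ 0 := fun h => hα2 (by nlinarith)
  have key : ∀ x y : ℝ, x ≠ y → Complex.I * (x : ℂ) ≠ Complex.I * (y : ℂ) := by
    intro x y hxy h
    exact hxy (by exact_mod_cast mul_left_cancel₀ Complex.I_ne_zero h)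
  have key2 : ∀ x y : ℝ, x ≠ -y → Complex.I * (x : ℂ) ≠ -(Complex.I * (y : ℂ)) := by
    intro x y hxy h
    apply key x (-y) hxy
    push_cast
    linear_combination h
  constructor
  · refine ⟨key2 _ _ (by intro h; apply h1; linarith), key _ _ (by intro h; nlinarith),
      key2 _ _ (by intro h; apply hα; linarith),
      (key2 _ _ (by intro h; apply hα; linarith)).symm,
      fun h => key _ _ (by intro h'; nlinarith) (neg_inj.mp h),
      key2 _ _ (by intro h; apply h2; linarith)⟩
  · intro w
    have hs2c : (s : ℂ) ^ 2 = -(c : ℂ) := by exact_mod_cast congrArg (Complex.ofReal) hs2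
    have hfac : w ^ 4 + ((2 * α ^ 2 - 2 * c : ℝ) : ℂ) * w ^ 2 + (((α ^ 2 + c) ^ 2 : ℝ) : ℂ) =
        (w - Complex.I * ((α : ℂ) + s)) * (w + Complex.I * ((α : ℂ) + s)) *
        ((w - Complex.I * ((α : ℂ) - s)) * (w + Complex.I * ((α : ℂ) - s))) := by
      have hceq : (c : ℂ) = -(s : ℂ) ^ 2 := by linear_combination hs2c
      push_cast
      rw [hceq]
      linear_combination (((2 : ℂ) * (α : ℂ) ^ 2 + 2 * (s : ℂ) ^ 2) * w ^ 2 +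
          (1 - Complex.I ^ 2) * ((α : ℂ) ^ 2 - (s : ℂ) ^ 2) ^ 2) * Complex.I_sq
    simp only [IsRoot, eval_add, eval_mul, eval_pow, eval_X, eval_C]
    rw [hfac, mul_eq_zero, mul_eq_zero, mul_eq_zero, sub_eq_zero, sub_eq_zero,
      add_eq_zero_iff_eq_neg, add_eq_zero_iff_eq_neg]
    push_cast
    tauto
end

section
/- For all real numbers α and β, the characteristic polynomial of the 4×4 matrix α·A(0) + β·B, where A(0) has rows (0,1,0,0), (0,0,0,0), (0,0,0,1), (0,0,0,0) and B has rows (0,0,1,0), (0,0,0,1), (−1,0,0,0), (0,−1,0,0), equals (X² + β²)²; in particular no linear combination of A(0) and B has four distinct eigenvalues, so the equilibrium (0,0,0,0,0) is a degenerate equilibrium of the reduced Maxwell–Bloch system. -/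
open Matrix Polynomial

theorem sq_eq_neg_of_isRoot_sq_add_C {R : Type*} [CommRing R] [IsDomain R] {c w : R}
    (h : ((X ^ 2 + C c) ^ 2).IsRoot w) : w ^ 2 = -c := by
  have hsq : (w ^ 2 + c) ^ 2 = 0 := by simpa using h
  linear_combination pow_eq_zero_iff two_ne_zero |>.mp hsq

/-- `(X² + c)²` has the same roots as `X² + c`, and those are determined up to sign. -/
theorem not_isRoot_sq_add_C_of_three_ne {R : Type*} [CommRing R] [IsDomain R] {c w₁ w₂ w₃ : R}
    (h₁₂ : w₁ ≠ w₂) (h₁₃ : w₁ ≠ w₃) (h₂₃ : w₂ ≠ w₃) (h₁ : ((X ^ 2 + C c) ^ 2).IsRoot w₁)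
    (h₂ : ((X ^ 2 + C c) ^ 2).IsRoot w₂) : ¬((X ^ 2 + C c) ^ 2).IsRoot w₃ := by
  intro h₃
  have hw₁ := sq_eq_neg_of_isRoot_sq_add_C h₁
  have neg_of_ne {w : R} (hw : ((X ^ 2 + C c) ^ 2).IsRoot w) (hne : w₁ ≠ w) : w = -w₁ :=
    (sq_eq_sq_iff_eq_or_eq_neg.mp ((sq_eq_neg_of_isRoot_sq_add_C hw).trans hw₁.symm)).resolve_left
      hne.symm
  exact h₂₃ ((neg_of_ne h₂ h₁₂).trans (neg_of_ne h₃ h₁₃).symm)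

theorem smul_add_smul_eq_of (a b : ℝ) :
    a • (!![0, 1, 0, 0; 0, 0, 0, 0; 0, 0, 0, 1; 0, 0, 0, 0] : Matrix (Fin 4) (Fin 4) ℝ) +
        b • (!![0, 0, 1, 0; 0, 0, 0, 1; -1, 0, 0, 0; 0, -1, 0, 0] : Matrix (Fin 4) (Fin 4) ℝ) =
      !![0, a, b, 0; 0, 0, 0, b; -b, 0, 0, a; 0, -b, 0, 0] := by
  ext i j
  fin_cases i <;> fin_cases j <;> simp

theorem charpoly_of_fin_four {R : Type*} [CommRing R] (a b : R) :
    (!![0, a, b, 0; 0, 0, 0, b; -b, 0, 0, a; 0, -b, 0, 0] : Matrix (Fin 4) (Fin 4) R).charpoly =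
      (X ^ 2 + C (b ^ 2)) ^ 2 := by
  simp [Matrix.charpoly, Matrix.charmatrix, Matrix.det_succ_row_zero, Fin.sum_univ_succ,
    Matrix.submatrix, Fin.succAbove, Matrix.diagonal_apply]
  ring

/-- Every linear combination `α·A(0) + β·B` of the linearizations at the origin has
characteristic polynomial `(X² + β²)²`; in particular no such combination has four distinct
eigenvalues, so the equilibrium `(0,0,0,0,0)` is degenerate. -/
theorem origin_degenerate (α β : ℝ) :
    ((α • (!![0, 1, 0, 0;
              0, 0, 0, 0;
              0, 0, 0, 1;
              0, 0, 0, 0] : Matrix (Fin 4) (Fin 4) ℝ) +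
       β • (!![0, 0, 1, 0;
               0, 0, 0, 1;
               -1, 0, 0, 0;
               0, -1, 0, 0] : Matrix (Fin 4) (Fin 4) ℝ)).charpoly =
      (X ^ 2 + C (β ^ 2)) ^ 2) ∧
    ¬∃ w1 w2 w3 w4 : ℂ,
      (w1 ≠ w2 ∧ w1 ≠ w3 ∧ w1 ≠ w4 ∧ w2 ≠ w3 ∧ w2 ≠ w4 ∧ w3 ≠ w4) ∧
      (((X ^ 2 + C ((β : ℂ) ^ 2)) ^ 2).IsRoot w1 ∧
       ((X ^ 2 + C ((β : ℂ) ^ 2)) ^ 2).IsRoot w2 ∧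
       ((X ^ 2 + C ((β : ℂ) ^ 2)) ^ 2).IsRoot w3 ∧
       ((X ^ 2 + C ((β : ℂ) ^ 2)) ^ 2).IsRoot w4) := by
  refine ⟨by rw [smul_add_smul_eq_of, charpoly_of_fin_four], ?_⟩
  rintro ⟨w₁, w₂, w₃, -, ⟨h₁₂, h₁₃, -, h₂₃, -, -⟩, h₁, h₂, h₃, -⟩
  exact not_isRoot_sq_add_C_of_three_ne h₁₂ h₁₃ h₂₃ h₁ h₂ h₃
end

section
/- The origin is a Lyapunov stable equilibrium of the 5-component Maxwell–Bloch system: for every ε > 0 there exists δ > 0 such that every differentiable solution γ : ℝ → ℝ⁵ of the system with ‖γ(0)‖ < δ satisfies ‖γ(t)‖ < ε for all t ≥ 0. -/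
/-!
Both `y₁² + y₂² + z²` and `x₁² + x₂² + 2z` are conserved along solutions. Their sum is
`‖p‖² + 2z`, so `‖p(t)‖² = ‖p(0)‖² + 2(z(0) - z(t))`, and conservation of the first one bounds
`|z(t)|` by `‖p(0)‖`. Hence `‖p(t)‖² ≤ ‖p(0)‖² + 4‖p(0)‖` for all `t`.
-/

open Real

theorem eq_of_hasDerivAt_zero {f : ℝ → ℝ} (hf : ∀ t, HasDerivAt f 0 t) (t s : ℝ) :
    f t = f s :=
  is_const_of_deriv_eq_zero (fun x ↦ (hf x).differentiableAt) (fun x ↦ (hf x).deriv) t s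

namespace MaxwellBloch

structure IsSolution (x1 y1 x2 y2 z : ℝ → ℝ) : Prop where
  hasDerivAt_x1 : ∀ t, HasDerivAt x1 (y1 t) t
  hasDerivAt_y1 : ∀ t, HasDerivAt y1 (x1 t * z t) t
  hasDerivAt_x2 : ∀ t, HasDerivAt x2 (y2 t) t
  hasDerivAt_y2 : ∀ t, HasDerivAt y2 (x2 t * z t) t
  hasDerivAt_z : ∀ t, HasDerivAt z (-(x1 t * y1 t + x2 t * y2 t)) t

def normSq (x1 y1 x2 y2 z : ℝ → ℝ) (t : ℝ) : ℝ :=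
  x1 t ^ 2 + y1 t ^ 2 + x2 t ^ 2 + y2 t ^ 2 + z t ^ 2

variable {x1 y1 x2 y2 z : ℝ → ℝ}

namespace IsSolution

theorem energy_eq (h : IsSolution x1 y1 x2 y2 z) (t : ℝ) :
    y1 t ^ 2 + y2 t ^ 2 + z t ^ 2 = y1 0 ^ 2 + y2 0 ^ 2 + z 0 ^ 2 :=
  eq_of_hasDerivAt_zero (fun s ↦
    ((((h.hasDerivAt_y1 s).pow 2).add ((h.hasDerivAt_y2 s).pow 2)).add
      ((h.hasDerivAt_z s).pow 2)).congr_deriv (by ring)) t 0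

theorem casimir_eq (h : IsSolution x1 y1 x2 y2 z) (t : ℝ) :
    x1 t ^ 2 + x2 t ^ 2 + 2 * z t = x1 0 ^ 2 + x2 0 ^ 2 + 2 * z 0 :=
  eq_of_hasDerivAt_zero (fun s ↦
    ((((h.hasDerivAt_x1 s).pow 2).add ((h.hasDerivAt_x2 s).pow 2)).add
      ((h.hasDerivAt_z s).const_mul 2)).congr_deriv (by ring)) t 0

theorem abs_z_le (h : IsSolution x1 y1 x2 y2 z) (t : ℝ) :
    |z t| ≤ √(normSq x1 y1 x2 y2 z 0) := by
  refine abs_le_sqrt ?_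
  have := h.energy_eq t
  unfold normSq
  nlinarith [sq_nonneg (y1 t), sq_nonneg (y2 t), sq_nonneg (x1 0), sq_nonneg (x2 0)]

theorem normSq_le (h : IsSolution x1 y1 x2 y2 z) (t : ℝ) :
    normSq x1 y1 x2 y2 z t ≤
      normSq x1 y1 x2 y2 z 0 + 4 * √(normSq x1 y1 x2 y2 z 0) := by
  have hdrift : normSq x1 y1 x2 y2 z t = normSq x1 y1 x2 y2 z 0 + 2 * (z 0 - z t) := by
    unfold normSq
    linarith [h.energy_eq t, h.casimir_eq t]
  rw [hdrift]
  linarith [le_abs_self (z 0), neg_abs_le (z t), h.abs_z_le 0, h.abs_z_le t]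

theorem sqrt_normSq_lt {ε : ℝ} (hε : 0 < ε) (h : IsSolution x1 y1 x2 y2 z)
    (h0 : √(normSq x1 y1 x2 y2 z 0) < min 1 (ε ^ 2 / 5)) (t : ℝ) :
    √(normSq x1 y1 x2 y2 z t) < ε := by
  set r := √(normSq x1 y1 x2 y2 z 0)
  have hr : 0 ≤ r := sqrt_nonneg _
  have hr1 : r < 1 := h0.trans_le (min_le_left _ _)
  have hrε : r < ε ^ 2 / 5 := h0.trans_le (min_le_right _ _)
  rw [sqrt_lt' hε]
  calc normSq x1 y1 x2 y2 z t ≤ r ^ 2 + 4 * r := by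
        rw [sq_sqrt (by unfold normSq; positivity)]; exact h.normSq_le t
    _ ≤ 5 * r := by nlinarith
    _ < ε ^ 2 := by linarith

end IsSolution

end MaxwellBloch

/-- The origin is a Lyapunov stable equilibrium of the 5-component Maxwell–Bloch system:
for every `ε > 0` there is `δ > 0` such that every solution starting within (Euclidean)
distance `δ` of the origin stays within distance `ε` for all `t ≥ 0`. -/
theorem maxwell_bloch_origin_stable :
    ∀ ε > (0 : ℝ), ∃ δ > (0 : ℝ), ∀ x1 y1 x2 y2 z : ℝ → ℝ,
      (∀ t, HasDerivAt x1 (y1 t) t) →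
      (∀ t, HasDerivAt y1 (x1 t * z t) t) →
      (∀ t, HasDerivAt x2 (y2 t) t) →
      (∀ t, HasDerivAt y2 (x2 t * z t) t) →
      (∀ t, HasDerivAt z (-(x1 t * y1 t + x2 t * y2 t)) t) →
      Real.sqrt ((x1 0) ^ 2 + (y1 0) ^ 2 + (x2 0) ^ 2 + (y2 0) ^ 2 + (z 0) ^ 2) < δ →
      ∀ t ≥ (0 : ℝ),
        Real.sqrt ((x1 t) ^ 2 + (y1 t) ^ 2 + (x2 t) ^ 2 + (y2 t) ^ 2 + (z t) ^ 2) < ε := by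
  intro ε hε
  refine ⟨min 1 (ε ^ 2 / 5), by positivity, ?_⟩
  intro x1 y1 x2 y2 z hx1 hy1 hx2 hy2 hz h0 t _
  exact MaxwellBloch.IsSolution.sqrt_normSq_lt hε ⟨hx1, hy1, hx2, hy2, hz⟩ h0 t
end

section
/- Let c > 0 and θ₀ ∈ ℝ, and fix signs ± consistently. The curve γ : ℝ → ℝ⁵ given by x₁(t) = ±2√c·sech(√c·t)·cos θ₀, x₂(t) = ±2√c·sech(√c·t)·sin θ₀, y₁(t) = ∓2c·sech(√c·t)·tanh(√c·t)·cos θ₀, y₂(t) = ∓2c·sech(√c·t)·tanh(√c·t)·sin θ₀, z(t) = c(1 − 2·sech²(√c·t)) is a solution of the 5-component Maxwell–Bloch system. -/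
/-!
With `a = √c`, each pair `(xᵢ, yᵢ)` is `(k a sech(a t), -k a² sech(a t) tanh(a t))` for a constant
`k`, and `z = a² (1 - 2 sech²(a t))`. The first four equations then reduce to the identities
`sech' = -sech tanh` and `(sech tanh)' = -sech (1 - 2 sech²)`, the latter because
`cosh² - sinh² = 1`. The equation for `z` holds because `s² (cos² θ₀ + sin² θ₀) = 1`.
-/

open Real

theorem HasDerivAt.inv_cosh {f : ℝ → ℝ} {f' t : ℝ} (hf : HasDerivAt f f' t) :
    HasDerivAt (fun t => (Real.cosh (f t))⁻¹) (-(Real.cosh (f t))⁻¹ * Real.tanh (f t) * f') t := by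
  refine (hf.cosh.inv (cosh_pos _).ne').congr_deriv ?_
  rw [tanh_eq_sinh_div_cosh]
  field_simp

theorem HasDerivAt.inv_cosh_mul_tanh {f : ℝ → ℝ} {f' t : ℝ} (hf : HasDerivAt f f' t) :
    HasDerivAt (fun t => (Real.cosh (f t))⁻¹ * Real.tanh (f t))
      (-(Real.cosh (f t))⁻¹ * (1 - 2 * (Real.cosh (f t))⁻¹ ^ 2) * f') t := by
  have hfun : (fun t => Real.sinh (f t) * (Real.cosh (f t))⁻¹ ^ 2) =
      fun t => (Real.cosh (f t))⁻¹ * Real.tanh (f t) := by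
    ext u
    rw [tanh_eq_sinh_div_cosh]
    ring
  refine hfun ▸ (hf.sinh.mul (hf.inv_cosh.fun_pow 2)).congr_deriv ?_
  have hcosh := (cosh_pos (f t)).ne'
  rw [tanh_eq_sinh_div_cosh]
  simp only [Nat.cast_ofNat, Nat.add_one_sub_one, pow_one]
  field_simp
  linear_combination 2 * f' * cosh_sq (f t)

theorem hasDerivAt_sech_pulse_pair (a k : ℝ) (x y : ℝ → ℝ)
    (hx : ∀ t, x t = k * a * (cosh (a * t))⁻¹)
    (hy : ∀ t, y t = -(k * a ^ 2) * ((cosh (a * t))⁻¹ * tanh (a * t))) :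
    (∀ t, HasDerivAt x (y t) t) ∧
      ∀ t, HasDerivAt y (x t * (a ^ 2 * (1 - 2 * (cosh (a * t))⁻¹ ^ 2))) t := by
  obtain rfl : x = _ := funext hx
  obtain rfl : y = _ := funext hy
  refine ⟨fun t => ?_, fun t => ?_⟩
  · exact (((hasDerivAt_id' t).const_mul a).inv_cosh.const_mul (k * a)).congr_deriv (by ring)
  · exact (((hasDerivAt_id' t).const_mul a).inv_cosh_mul_tanh.const_mul (-(k * a ^ 2))).congr_deriv
      (by ring)

theorem hasDerivAt_sech_inversion (a t : ℝ) :
    HasDerivAt (fun t => a ^ 2 * (1 - 2 * (cosh (a * t))⁻¹ ^ 2))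
      (4 * a ^ 3 * (cosh (a * t))⁻¹ ^ 2 * tanh (a * t)) t := by
  have hsech := ((hasDerivAt_id' t).const_mul a).inv_cosh
  exact (((hsech.fun_pow 2).const_mul 2).const_sub 1).const_mul (a ^ 2) |>.congr_deriv (by ring)

/-- For `c > 0`, `θ₀ ∈ ℝ` and a consistent choice of sign `s = ±1`, the curve
`x₁ = ±2√c sech(√c t) cos θ₀`, `x₂ = ±2√c sech(√c t) sin θ₀`,
`y₁ = ∓2c sech(√c t) tanh(√c t) cos θ₀`, `y₂ = ∓2c sech(√c t) tanh(√c t) sin θ₀`,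
`z = c(1 − 2 sech²(√c t))` solves the 5-component Maxwell–Bloch system. -/
theorem maxwell_bloch_homoclinic_solution (c θ₀ s : ℝ) (hc : 0 < c) (hs : s = 1 ∨ s = -1)
    (x1 y1 x2 y2 z : ℝ → ℝ)
    (hx1 : ∀ t, x1 t = s * (2 * Real.sqrt c * (Real.cosh (Real.sqrt c * t))⁻¹ * Real.cos θ₀))
    (hx2 : ∀ t, x2 t = s * (2 * Real.sqrt c * (Real.cosh (Real.sqrt c * t))⁻¹ * Real.sin θ₀))
    (hy1 : ∀ t, y1 t = -s * (2 * c * (Real.cosh (Real.sqrt c * t))⁻¹ *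
      Real.tanh (Real.sqrt c * t) * Real.cos θ₀))
    (hy2 : ∀ t, y2 t = -s * (2 * c * (Real.cosh (Real.sqrt c * t))⁻¹ *
      Real.tanh (Real.sqrt c * t) * Real.sin θ₀))
    (hz : ∀ t, z t = c * (1 - 2 * ((Real.cosh (Real.sqrt c * t))⁻¹) ^ 2)) :
    (∀ t, HasDerivAt x1 (y1 t) t) ∧
    (∀ t, HasDerivAt y1 (x1 t * z t) t) ∧
    (∀ t, HasDerivAt x2 (y2 t) t) ∧
    (∀ t, HasDerivAt y2 (x2 t * z t) t) ∧
    (∀ t, HasDerivAt z (-(x1 t * y1 t + x2 t * y2 t)) t) := by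
  set a := √c
  have hca : c = a ^ 2 := (sq_sqrt hc.le).symm
  have hs2 : s ^ 2 = 1 := by rcases hs with rfl | rfl <;> norm_num
  have hz' (t : ℝ) : z t = a ^ 2 * (1 - 2 * (cosh (a * t))⁻¹ ^ 2) := by rw [hz, hca]
  obtain ⟨hx1', hy1'⟩ := hasDerivAt_sech_pulse_pair a (2 * s * cos θ₀) x1 y1
    (fun t => by rw [hx1]; ring) (fun t => by rw [hy1, hca]; ring)
  obtain ⟨hx2', hy2'⟩ := hasDerivAt_sech_pulse_pair a (2 * s * sin θ₀) x2 y2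
    (fun t => by rw [hx2]; ring) (fun t => by rw [hy2, hca]; ring)
  refine ⟨hx1', fun t => hz' t ▸ hy1' t, hx2', fun t => hz' t ▸ hy2' t, fun t => ?_⟩
  refine (funext hz' ▸ hasDerivAt_sech_inversion a t).congr_deriv ?_
  rw [hx1, hx2, hy1, hy2, hca]
  linear_combination -4 * a ^ 3 * (cosh (a * t))⁻¹ ^ 2 * tanh (a * t) *
    ((sin θ₀ ^ 2 + cos θ₀ ^ 2) * hs2 + sin_sq_add_cos_sq θ₀)
end

section
/- Let c > 0 and θ₀ ∈ ℝ, and let γ : ℝ → ℝ⁵ be the curve x₁(t) = 2√c·sech(√c·t)·cos θ₀, x₂(t) = 2√c·sech(√c·t)·sin θ₀, y₁(t) = −2c·sech(√c·t)·tanh(√c·t)·cos θ₀, y₂(t) = −2c·sech(√c·t)·tanh(√c·t)·sin θ₀, z(t) = c(1 − 2·sech²(√c·t)). Then γ(t) → (0,0,0,0,c) as t → +∞ and as t → −∞, and for all t one has H(γ(t)) = c²/2, I(γ(t)) = 0, and C(γ(t)) = c; i.e., γ is a homoclinic orbit to the unstable equilibrium (0,0,0,0,c) lying on the level set H = c²/2,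 I = 0 of the symplectic leaf C⁻¹(c). -/
/-!
Write `s = sech (√c t)` and `τ = tanh (√c t)`. The curve is a continuous (indeed polynomial) image
of `(s, s τ)` that sends `(0, 0)` to the equilibrium; since `cosh` grows like `exp |u|`, both
coordinates tend to `0` along the cocompact filter of `ℝ`, which contains `atTop` and `atBot`.
The three invariants are polynomial identities modulo `τ² + s² = 1` and `cos² θ₀ + sin² θ₀ = 1`.
-/

open Filter Topology Real

lemma Real.tendsto_cosh_cocompact : Tendsto cosh (cocompact ℝ) atTop := by
  refine tendsto_atTop_mono (fun x => ?_)
    ((tendsto_exp_atTop.comp tendsto_norm_cocompact_atTop).atTop_div_const two_pos)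
  rw [Function.comp_apply, norm_eq_abs, ← cosh_abs, cosh_eq]
  linarith [exp_pos (-|x|)]

lemma Real.tendsto_inv_cosh_cocompact : Tendsto (fun u => (cosh u)⁻¹) (cocompact ℝ) (𝓝 0) :=
  tendsto_cosh_cocompact.inv_tendsto_atTop

lemma Real.tendsto_inv_cosh_mul_tanh_cocompact :
    Tendsto (fun u => (cosh u)⁻¹ * tanh u) (cocompact ℝ) (𝓝 0) := by
  refine squeeze_zero_norm (fun u => ?_) tendsto_inv_cosh_cocompact
  rw [norm_mul, norm_inv, norm_of_nonneg (cosh_pos u).le, norm_eq_abs]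
  exact mul_le_of_le_one_right (inv_nonneg.2 (cosh_pos u).le) (abs_tanh_lt_one u).le

lemma Real.tanh_sq_add_inv_cosh_sq (u : ℝ) : tanh u ^ 2 + (cosh u)⁻¹ ^ 2 = 1 := by
  rw [tanh_eq_sinh_div_cosh]
  field_simp
  linear_combination (cosh_sq u).symm

/-- The homoclinic curve tends to the equilibrium `(0,0,0,0,c)` as `t → ±∞` and lies on the
level set `H = c²/2`, `I = 0` of the symplectic leaf `C⁻¹(c)`. -/
theorem maxwell_bloch_homoclinic_orbit (c θ₀ : ℝ) (hc : 0 < c)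
    (x1 y1 x2 y2 z : ℝ → ℝ)
    (hx1 : ∀ t, x1 t = 2 * Real.sqrt c * (Real.cosh (Real.sqrt c * t))⁻¹ * Real.cos θ₀)
    (hx2 : ∀ t, x2 t = 2 * Real.sqrt c * (Real.cosh (Real.sqrt c * t))⁻¹ * Real.sin θ₀)
    (hy1 : ∀ t, y1 t = -(2 * c * (Real.cosh (Real.sqrt c * t))⁻¹ *
      Real.tanh (Real.sqrt c * t) * Real.cos θ₀))
    (hy2 : ∀ t, y2 t = -(2 * c * (Real.cosh (Real.sqrt c * t))⁻¹ *
      Real.tanh (Real.sqrt c * t) * Real.sin θ₀))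
    (hz : ∀ t, z t = c * (1 - 2 * ((Real.cosh (Real.sqrt c * t))⁻¹) ^ 2)) :
    Tendsto (fun t => (x1 t, y1 t, x2 t, y2 t, z t)) atTop
      (nhds ((0, 0, 0, 0, c) : ℝ × ℝ × ℝ × ℝ × ℝ)) ∧
    Tendsto (fun t => (x1 t, y1 t, x2 t, y2 t, z t)) atBot
      (nhds ((0, 0, 0, 0, c) : ℝ × ℝ × ℝ × ℝ × ℝ)) ∧
    (∀ t : ℝ, (1 / 2) * ((y1 t) ^ 2 + (y2 t) ^ 2 + (z t) ^ 2) = c ^ 2 / 2 ∧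
      x2 t * y1 t - x1 t * y2 t = 0 ∧
      (1 / 2) * ((x1 t) ^ 2 + (x2 t) ^ 2) + z t = c) := by
  have hsc : Real.sqrt c ≠ 0 := (Real.sqrt_pos.2 hc).ne'
  let F : ℝ × ℝ → ℝ × ℝ × ℝ × ℝ × ℝ := fun p =>
    (2 * Real.sqrt c * p.1 * Real.cos θ₀, -(2 * c * p.2 * Real.cos θ₀),
      2 * Real.sqrt c * p.1 * Real.sin θ₀, -(2 * c * p.2 * Real.sin θ₀), c * (1 - 2 * p.1 ^ 2))
  have hcurve : (fun t => (x1 t, y1 t, x2 t, y2 t, z t)) =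
      F ∘ (fun u => ((Real.cosh u)⁻¹, (Real.cosh u)⁻¹ * Real.tanh u)) ∘ (Real.sqrt c * ·) := by
    funext t
    simp only [Function.comp_apply, F, hx1, hx2, hy1, hy2, hz, mul_assoc]
  have hF : Tendsto F (𝓝 (0, 0)) (𝓝 (0, 0, 0, 0, c)) := by
    simpa [F] using (by fun_prop : Continuous F).tendsto (0, 0)
  have hlim : Tendsto (fun t => (x1 t, y1 t, x2 t, y2 t, z t)) (cocompact ℝ)
      (𝓝 (0, 0, 0, 0, c)) := by
    rw [hcurve]
    exact hF.comp ((tendsto_inv_cosh_cocompact.prodMk_nhds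
      tendsto_inv_cosh_mul_tanh_cocompact).comp (tendsto_cocompact_mul_left₀ hsc))
  refine ⟨hlim.mono_left atTop_le_cocompact, hlim.mono_left atBot_le_cocompact, fun t => ?_⟩
  have hsech := tanh_sq_add_inv_cosh_sq (Real.sqrt c * t)
  have hθ₀ := Real.sin_sq_add_cos_sq θ₀
  have hsqrt := Real.sq_sqrt hc.le
  set s := (Real.cosh (Real.sqrt c * t))⁻¹
  set τ := Real.tanh (Real.sqrt c * t)
  rw [hx1, hx2, hy1, hy2, hz]
  refine ⟨?_, by ring, ?_⟩
  · linear_combination (2 * c ^ 2 * s ^ 2 * τ ^ 2) * hθ₀ + (2 * c ^ 2 * s ^ 2) * hsech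
  · linear_combination (2 * s ^ 2 * Real.sqrt c ^ 2) * hθ₀ + (2 * s ^ 2) * hsqrt
end

section
/- Let F : ℝ⁵ → ℝ³ be F(p) = (H(p), I(p), C(p)), and for p ∈ ℝ⁵ let ∇F(p) denote the 3×5 matrix whose rows are ∇H(p), ∇I(p), ∇C(p). Then rank ∇F(p) = 2 if and only if p ∈ M₁ ∪ M₂, where M₁ = {(x₁, y₁, x₂, −x₁y₁/x₂, −y₁²/x₂²) : x₁,y₁ ∈ ℝ, x₂ ≠ 0} and M₂ = {(x₁, 0, 0, y₂, −y₂²/x₁²) : y₂ ∈ ℝ, x₁ ≠ 0}. -/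
/-!
The fifth coordinates of `∇I(p)` and `∇C(p)` are `0` and `1`, so these two gradients are
independent unless `∇I(p) = 0`, i.e. `x₁ = y₁ = x₂ = y₂ = 0`, where every row is a multiple of
`∇C(p)` and the rank is 1. Otherwise the rank is 2 exactly when `∇H(p) = a ∇I(p) + b ∇C(p)`;
the fifth coordinate forces `b = z`, and the remaining four equations are solvable in `a`
(with `a = y₁ / x₂` if `x₂ ≠ 0`, and `a = -y₂ / x₁` otherwise) precisely on `M₁ ∪ M₂`.
-/

open Matrix Submodule Module

theorem linearIndependent_pair_of_apply_eq_zero {K ι : Type*} [Ring K] [NoZeroDivisors K]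
    {u v : ι → K} (hu : u ≠ 0) {k : ι} (huk : u k = 0) (hvk : v k ≠ 0) :
    LinearIndependent K ![u, v] := by
  rw [LinearIndependent.pair_iff]
  intro s t hst
  obtain rfl : t = 0 := by simpa [huk, hvk] using congrFun hst k
  simpa [hu] using hst

theorem finrank_span_range_eq_two_iff {K V : Type*} [DivisionRing K] [AddCommGroup V]
    [Module K V] (v : Fin 3 → V) (h : LinearIndependent K ![v 1, v 2]) :
    finrank K (span K (Set.range v)) = 2 ↔ v 0 ∈ span K {v 1, v 2} := by
  have htail : Fin.tail v = ![v 1, v 2] := by ext i; fin_cases i <;> rfl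
  have hW : finrank K (span K {v 1, v 2}) = 2 := by
    rw [← range_cons_cons_empty _ _ ![], finrank_span_eq_card h, Fintype.card_fin]
  by_cases h0 : v 0 ∈ span K {v 1, v 2}
  · rw [Fin.range_fin_succ, htail, range_cons_cons_empty, span_insert_eq_span h0, hW]
    exact iff_of_true rfl h0
  · have hv : LinearIndependent K v := by
      rw [← Fin.cons_self_tail v, linearIndependent_finCons, htail, range_cons_cons_empty]
      exact ⟨h, h0⟩
    simp [finrank_span_eq_card hv, h0]

theorem Matrix.rank_le_one_of_forall_mem_span_singleton {K m n : Type*} [Field K] [Finite m]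
    [Fintype n] (A : Matrix m n K) (v : n → K) (h : ∀ i, A i ∈ span K {v}) : A.rank ≤ 1 := by
  rw [rank_eq_finrank_span_row]
  calc finrank K (span K (Set.range A.row)) ≤ finrank K (span K {v}) :=
        finrank_mono (span_le.mpr (Set.range_subset_iff.mpr h))
    _ ≤ 1 := (finrank_span_le_card {v}).trans (by simp)

theorem exists_smul_gradI_add_gradC_eq_gradH_iff {x1 y1 x2 y2 z : ℝ}
    (hI : ¬(x1 = 0 ∧ y1 = 0 ∧ x2 = 0 ∧ y2 = 0)) :
    (∃ a, -(a * y2) + z * x1 = 0 ∧ a * x2 = y1 ∧ a * y1 + z * x2 = 0 ∧ -(a * x1) = y2) ↔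
    ((x2 ≠ 0 ∧ y2 = -(x1 * y1) / x2 ∧ z = -y1 ^ 2 / x2 ^ 2) ∨
     (x1 ≠ 0 ∧ y1 = 0 ∧ x2 = 0 ∧ z = -y2 ^ 2 / x1 ^ 2)) := by
  constructor
  · rintro ⟨a, h0, h1, h2, h3⟩
    by_cases hx2 : x2 = 0
    · subst hx2
      obtain rfl : y1 = 0 := by simpa using h1.symm
      have hx1 : x1 ≠ 0 := by
        rintro rfl
        simp_all
      refine Or.inr ⟨hx1, rfl, rfl, ?_⟩
      rw [eq_div_iff (by positivity)]
      linear_combination x1 * h0 - y2 * h3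
    · refine Or.inl ⟨hx2, ?_, ?_⟩
      · rw [eq_div_iff hx2]
        linear_combination -x2 * h3 - x1 * h1
      · rw [eq_div_iff (by positivity)]
        linear_combination x2 * h2 - y1 * h1
  · rintro (⟨hx2, rfl, rfl⟩ | ⟨hx1, rfl, rfl, rfl⟩)
    · refine ⟨y1 / x2, ?_, ?_, ?_, ?_⟩ <;> field_simp <;> ring
    · refine ⟨-y2 / x1, ?_, ?_, ?_, ?_⟩ <;> field_simp <;> ring

/-- For `F = (H, I, C) : ℝ⁵ → ℝ³`, the gradient matrix `∇F(p)` (rows `∇H(p)`, `∇I(p)`,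
`∇C(p)`) has rank 2 exactly on the set `M₁ ∪ M₂`, where
`M₁ = {(x₁, y₁, x₂, −x₁y₁/x₂, −y₁²/x₂²) : x₂ ≠ 0}` and
`M₂ = {(x₁, 0, 0, y₂, −y₂²/x₁²) : x₁ ≠ 0}`. -/
theorem rank_two_invariant_set (x1 y1 x2 y2 z : ℝ) :
    (!![0, y1, 0, y2, z;
        -y2, x2, y1, -x1, 0;
        x1, 0, x2, 0, 1] : Matrix (Fin 3) (Fin 5) ℝ).rank = 2 ↔
    ((x2 ≠ 0 ∧ y2 = -(x1 * y1) / x2 ∧ z = -y1 ^ 2 / x2 ^ 2) ∨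
     (x1 ≠ 0 ∧ y1 = 0 ∧ x2 = 0 ∧ z = -y2 ^ 2 / x1 ^ 2)) := by
  set A : Matrix (Fin 3) (Fin 5) ℝ := !![0, y1, 0, y2, z; -y2, x2, y1, -x1, 0; x1, 0, x2, 0, 1]
  by_cases hI : x1 = 0 ∧ y1 = 0 ∧ x2 = 0 ∧ y2 = 0
  · obtain ⟨rfl, rfl, rfl, rfl⟩ := hI
    have hA : A.rank ≤ 1 := by
      refine A.rank_le_one_of_forall_mem_span_singleton (A 2) fun i ↦ ?_
      refine mem_span_singleton.mpr ⟨![z, 0, 1] i, ?_⟩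
      ext j
      fin_cases i <;> fin_cases j <;> simp [A]
    exact iff_of_false (by omega) (by simp)
  · have hI_ne : A 1 ≠ 0 := fun h ↦ hI (by simp [A, funext_iff, Fin.forall_fin_succ] at h; tauto)
    have hIC : LinearIndependent ℝ ![A 1, A 2] :=
      linearIndependent_pair_of_apply_eq_zero hI_ne (k := 4) rfl (by simp [A])
    rw [rank_eq_finrank_span_row, finrank_span_range_eq_two_iff A.row hIC]
    simpa [A, mem_span_pair, funext_iff, Fin.forall_fin_succ] using
      exists_smul_gradI_add_gradC_eq_gradH_iff hI
end

section
/- Let γ = (x₁, y₁, x₂) : J → ℝ³ be a differentiable solution on an interval J of the system x₁' = y₁, y₁' = −x₁y₁²/x₂², x₂' = −x₁y₁/x₂, where x₂(t) ≠ 0 for all t ∈ J. Then the functions t ↦ x₁(t)² + x₂(t)² and t ↦ y₁(t)/x₂(t) are constant on J. -/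
/-!
Both quantities have zero derivative along the flow: `(x₁² + x₂²)' = 2(x₁y₁ + x₂x₂') = 0`, and
by the quotient rule `(y₁/x₂)' = (y₁'x₂ − y₁x₂')/x₂² = 0`, since `y₁'x₂ = −x₁y₁²/x₂ = y₁x₂'`.
A function with zero derivative on an interval is constant by the mean value inequality.
-/

theorem Convex.eq_of_hasDerivWithinAt_eq_zero {E : Type*} [NormedAddCommGroup E]
    [NormedSpace ℝ E] {f : ℝ → E} {s : Set ℝ} (hs : Convex ℝ s)
    (hf : ∀ x ∈ s, HasDerivWithinAt f 0 s x) {x y : ℝ} (hx : x ∈ s) (hy : y ∈ s) :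
    f x = f y := by
  have h := hs.norm_image_sub_le_of_norm_hasDerivWithin_le (C := 0) hf
    (fun _ _ => by rw [norm_zero]) hy hx
  rwa [zero_mul, norm_le_zero_iff, sub_eq_zero] at h

section

variable {f g : ℝ → ℝ} {f' g' t : ℝ} {s : Set ℝ}

theorem HasDerivWithinAt.sq_add_sq_eq_zero (hf : HasDerivWithinAt f f' s t)
    (hg : HasDerivWithinAt g g' s t) (h : f t * f' + g t * g' = 0) :
    HasDerivWithinAt (fun u => f u ^ 2 + g u ^ 2) 0 s t := by
  refine ((hf.pow 2).add (hg.pow 2)).congr_deriv ?_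
  linear_combination (2 : ℝ) * h

theorem HasDerivWithinAt.div_eq_zero (hf : HasDerivWithinAt f f' s t)
    (hg : HasDerivWithinAt g g' s t) (hgt : g t ≠ 0) (h : f' * g t = f t * g') :
    HasDerivWithinAt (fun u => f u / g u) 0 s t := by
  refine (hf.div hg hgt).congr_deriv ?_
  rw [h, sub_self, zero_div]

end

/-- Along any solution of the restricted system `x₁' = y₁`, `y₁' = −x₁y₁²/x₂²`,
`x₂' = −x₁y₁/x₂` on an interval `J` with `x₂ ≠ 0` on `J`, the quantities
`x₁² + x₂²` and `y₁/x₂` are constant. -/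
theorem restricted_system_conserved (J : Set ℝ) (hJ : J.OrdConnected)
    (x1 y1 x2 : ℝ → ℝ)
    (hx2ne : ∀ t ∈ J, x2 t ≠ 0)
    (h1 : ∀ t ∈ J, HasDerivWithinAt x1 (y1 t) J t)
    (h2 : ∀ t ∈ J, HasDerivWithinAt y1 (-(x1 t * (y1 t) ^ 2) / (x2 t) ^ 2) J t)
    (h3 : ∀ t ∈ J, HasDerivWithinAt x2 (-(x1 t * y1 t) / x2 t) J t) :
    ∀ t ∈ J, ∀ s ∈ J,
      (x1 t) ^ 2 + (x2 t) ^ 2 = (x1 s) ^ 2 + (x2 s) ^ 2 ∧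
      y1 t / x2 t = y1 s / x2 s := by
  intro t ht s hs
  have hradius : ∀ u ∈ J, HasDerivWithinAt (fun u => x1 u ^ 2 + x2 u ^ 2) 0 J u := by
    intro u hu
    refine (h1 u hu).sq_add_sq_eq_zero (h3 u hu) ?_
    field_simp [hx2ne u hu]
    ring
  have hratio : ∀ u ∈ J, HasDerivWithinAt (fun u => y1 u / x2 u) 0 J u := by
    intro u hu
    refine (h2 u hu).div_eq_zero (h3 u hu) (hx2ne u hu) ?_
    field_simp [hx2ne u hu]
  exact ⟨hJ.convex.eq_of_hasDerivWithinAt_eq_zero hradius ht hs,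
    hJ.convex.eq_of_hasDerivWithinAt_eq_zero hratio ht hs⟩
end

section
/- Let x₁⁰, y₁⁰, x₂⁰ ∈ ℝ with x₂⁰ ≠ 0 and y₁⁰ ≠ 0, and set ω = y₁⁰/x₂⁰. The curve x₁(t) = x₂⁰ sin(ωt) + x₁⁰ cos(ωt), y₁(t) = −ω(x₁⁰ sin(ωt) − x₂⁰ cos(ωt)), x₂(t) = −x₁⁰ sin(ωt) + x₂⁰ cos(ωt) satisfies x₁(0) = x₁⁰, y₁(0) = y₁⁰, x₂(0) = x₂⁰ and solves the system x₁' = y₁, y₁' = −x₁y₁²/x₂², x₂' = −x₁y₁/x₂ on every interval on which x₂(t) ≠ 0. -/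
/-- The explicit trigonometric curve with frequency `ω = y₁⁰/x₂⁰` has the prescribed initial
conditions and solves the restricted system `x₁' = y₁`, `y₁' = −x₁y₁²/x₂²`, `x₂' = −x₁y₁/x₂`
wherever `x₂(t) ≠ 0`. -/
theorem restricted_system_explicit_solution (x10 y10 x20 : ℝ)
    (hx20 : x20 ≠ 0) (hy10 : y10 ≠ 0) (ω : ℝ) (hω : ω = y10 / x20)
    (x1 y1 x2 : ℝ → ℝ)
    (hx1 : ∀ t, x1 t = x20 * Real.sin (ω * t) + x10 * Real.cos (ω * t))
    (hy1 : ∀ t, y1 t = -ω * (x10 * Real.sin (ω * t) - x20 * Real.cos (ω * t)))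
    (hx2 : ∀ t, x2 t = -x10 * Real.sin (ω * t) + x20 * Real.cos (ω * t)) :
    (x1 0 = x10 ∧ y1 0 = y10 ∧ x2 0 = x20) ∧
    ∀ t : ℝ, x2 t ≠ 0 →
      HasDerivAt x1 (y1 t) t ∧
      HasDerivAt y1 (-(x1 t * (y1 t) ^ 2) / (x2 t) ^ 2) t ∧
      HasDerivAt x2 (-(x1 t * y1 t) / x2 t) t := by
  constructor
  · refine ⟨?_, ?_, ?_⟩ <;> simp [hx1, hy1, hx2, hω, div_mul_cancel₀ _ hx20]
  · intro t ht
    have hs : HasDerivAt (fun t => Real.sin (ω * t)) (Real.cos (ω * t) * ω) t :=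
      (Real.hasDerivAt_sin (ω * t)).comp t ((hasDerivAt_id t).const_mul ω) |>.congr_deriv
        (by ring)
    have hc : HasDerivAt (fun t => Real.cos (ω * t)) (-Real.sin (ω * t) * ω) t :=
      (Real.hasDerivAt_cos (ω * t)).comp t ((hasDerivAt_id t).const_mul ω) |>.congr_deriv
        (by ring)
    have hyx : y1 t = ω * x2 t := by rw [hy1, hx2]; ring
    have hx1' : x1 = fun t => x20 * Real.sin (ω * t) + x10 * Real.cos (ω * t) := funext hx1
    have hy1' : y1 = fun t => -ω * (x10 * Real.sin (ω * t) - x20 * Real.cos (ω * t)) :=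
      funext hy1
    have hx2' : x2 = fun t => -x10 * Real.sin (ω * t) + x20 * Real.cos (ω * t) := funext hx2
    refine ⟨?_, ?_, ?_⟩
    · rw [hx1']
      exact ((hs.const_mul x20).add (hc.const_mul x10)).congr_deriv (by rw [hy1]; ring)
    · rw [show -(x1 t * (y1 t) ^ 2) / (x2 t) ^ 2 = -(ω ^ 2 * x1 t) by
        rw [hyx]; field_simp]
      rw [hy1']
      exact (((hs.const_mul x10).sub (hc.const_mul x20)).const_mul (-ω)).congr_deriv
        (by rw [hx1]; ring)
    · rw [show -(x1 t * y1 t) / x2 t = -(ω * x1 t) by rw [hyx]; field_simp]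
      rw [hx2']
      exact (((hs.const_mul (-x10)).add (hc.const_mul x20))).congr_deriv (by rw [hx1]; ring)
end

section
/- Let x₁⁰, y₁⁰, x₂⁰ ∈ ℝ with x₂⁰ ≠ 0 and y₁⁰ ≠ 0, and set ω = y₁⁰/x₂⁰. The curve γ : ℝ → ℝ⁵ given by x₁(t) = x₂⁰ sin(ωt) + x₁⁰ cos(ωt), y₁(t) = −ω(x₁⁰ sin(ωt) − x₂⁰ cos(ωt)), x₂(t) = −x₁⁰ sin(ωt) + x₂⁰ cos(ωt), y₂(t) = −ω(x₂⁰ sin(ωt) + x₁⁰ cos(ωt)), z(t) = −ω² is a solution of the 5-component Maxwell–Bloch system defined for all t ∈ ℝ, and it is periodic with period 2π/|ω| = 2π|x₂⁰/y₁⁰|. -/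
/-! The curve is a uniform rotation with angular speed `ω` in the `(x₁, x₂)`-plane, with
`yᵢ = xᵢ'`. Each component has the form `a sin(ωt) + b cos(ωt)`, so `xᵢ'' = -ω² xᵢ = xᵢ z`; and
`x₁y₁ + x₂y₂ = (x₁² + x₂²)'/2 = 0` because the radius is constant, matching `z' = 0`. -/

open Real

theorem Function.Periodic.comp_mul_div_abs {α : Type*} {f : ℝ → α} {c : ℝ}
    (hf : Function.Periodic f c) (ω : ℝ) :
    Function.Periodic (fun t => f (ω * t)) (c / |ω|) := by
  rcases abs_choice ω with hω | hω
  · simpa [hω, div_eq_inv_mul] using hf.const_mul ω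
  · simpa [hω, div_eq_inv_mul] using (hf.const_mul ω).neg

theorem hasDerivAt_of_eq_sin_mul_add_cos_mul {f : ℝ → ℝ} {a b ω : ℝ}
    (hf : ∀ t, f t = a * sin (ω * t) + b * cos (ω * t)) (t : ℝ) :
    HasDerivAt f (ω * (a * cos (ω * t) - b * sin (ω * t))) t := by
  have hωt : HasDerivAt (fun t => ω * t) ω t := by simpa using (hasDerivAt_id t).const_mul ω
  rw [funext hf]
  exact ((hωt.sin.const_mul a).add (hωt.cos.const_mul b)).congr_deriv (by ring)

theorem maxwell_bloch_periodic_solution_general (x10 y10 x20 : ℝ)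
    (ω : ℝ) (hω : ω = y10 / x20)
    (x1 y1 x2 y2 z : ℝ → ℝ)
    (hx1 : ∀ t, x1 t = x20 * Real.sin (ω * t) + x10 * Real.cos (ω * t))
    (hy1 : ∀ t, y1 t = -ω * (x10 * Real.sin (ω * t) - x20 * Real.cos (ω * t)))
    (hx2 : ∀ t, x2 t = -x10 * Real.sin (ω * t) + x20 * Real.cos (ω * t))
    (hy2 : ∀ t, y2 t = -ω * (x20 * Real.sin (ω * t) + x10 * Real.cos (ω * t)))
    (hz : ∀ t, z t = -ω ^ 2) :
    ((∀ t, HasDerivAt x1 (y1 t) t) ∧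
     (∀ t, HasDerivAt y1 (x1 t * z t) t) ∧
     (∀ t, HasDerivAt x2 (y2 t) t) ∧
     (∀ t, HasDerivAt y2 (x2 t * z t) t) ∧
     (∀ t, HasDerivAt z (-(x1 t * y1 t + x2 t * y2 t)) t)) ∧
    Function.Periodic (fun t => (x1 t, y1 t, x2 t, y2 t, z t)) (2 * Real.pi / |ω|) ∧
    2 * Real.pi / |ω| = 2 * Real.pi * |x20 / y10| := by
  refine ⟨⟨fun t => ?_, fun t => ?_, fun t => ?_, fun t => ?_, fun t => ?_⟩, fun t => ?_, ?_⟩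
  · exact (hasDerivAt_of_eq_sin_mul_add_cos_mul hx1 t).congr_deriv (by rw [hy1]; ring)
  · exact (hasDerivAt_of_eq_sin_mul_add_cos_mul (a := -ω * x10) (b := ω * x20)
      (fun t => by rw [hy1]; ring) t).congr_deriv (by rw [hx1, hz]; ring)
  · exact (hasDerivAt_of_eq_sin_mul_add_cos_mul hx2 t).congr_deriv (by rw [hy2]; ring)
  · exact (hasDerivAt_of_eq_sin_mul_add_cos_mul (a := -ω * x20) (b := -ω * x10)
      (fun t => by rw [hy2]; ring) t).congr_deriv (by rw [hx2, hz]; ring)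
  · rw [funext hz]
    exact (hasDerivAt_const t _).congr_deriv (by rw [hx1, hy1, hx2, hy2]; ring)
  · have hsin : ∀ t, sin (ω * (t + 2 * π / |ω|)) = sin (ω * t) :=
      sin_periodic.comp_mul_div_abs ω
    have hcos : ∀ t, cos (ω * (t + 2 * π / |ω|)) = cos (ω * t) :=
      cos_periodic.comp_mul_div_abs ω
    simp only [hx1, hy1, hx2, hy2, hz, hsin, hcos]
  · rw [hω, abs_div, abs_div, div_div_eq_mul_div, mul_div_assoc]

/-- The explicit curve with frequency `ω = y₁⁰/x₂⁰`, constant `z = −ω²` and the trigonometric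
components below is a globally defined solution of the 5-component Maxwell–Bloch system, and it
is periodic with period `2π/|ω| = 2π|x₂⁰/y₁⁰|`. -/
theorem maxwell_bloch_periodic_solution (x10 y10 x20 : ℝ)
    (hx20 : x20 ≠ 0) (hy10 : y10 ≠ 0) (ω : ℝ) (hω : ω = y10 / x20)
    (x1 y1 x2 y2 z : ℝ → ℝ)
    (hx1 : ∀ t, x1 t = x20 * Real.sin (ω * t) + x10 * Real.cos (ω * t))
    (hy1 : ∀ t, y1 t = -ω * (x10 * Real.sin (ω * t) - x20 * Real.cos (ω * t)))
    (hx2 : ∀ t, x2 t = -x10 * Real.sin (ω * t) + x20 * Real.cos (ω * t))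
    (hy2 : ∀ t, y2 t = -ω * (x20 * Real.sin (ω * t) + x10 * Real.cos (ω * t)))
    (hz : ∀ t, z t = -ω ^ 2) :
    ((∀ t, HasDerivAt x1 (y1 t) t) ∧
     (∀ t, HasDerivAt y1 (x1 t * z t) t) ∧
     (∀ t, HasDerivAt x2 (y2 t) t) ∧
     (∀ t, HasDerivAt y2 (x2 t * z t) t) ∧
     (∀ t, HasDerivAt z (-(x1 t * y1 t + x2 t * y2 t)) t)) ∧
    Function.Periodic (fun t => (x1 t, y1 t, x2 t, y2 t, z t)) (2 * Real.pi / |ω|) ∧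
    2 * Real.pi / |ω| = 2 * Real.pi * |x20 / y10| :=
  maxwell_bloch_periodic_solution_general x10 y10 x20 ω hω x1 y1 x2 y2 z hx1 hy1 hx2 hy2 hz
end
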